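/- Let n ≥ 2, 0 < σ < 2, λ ∈ ℝ, and let W ∈ C^{1,1}_loc(ℝⁿ) ∩ L_σ be anti-symmetric about T_λ (W(x^λ) = -W(x) for all x). There exists a constant C > 0 depending only on n and σ with the following property: if W attains its minimum over Σ_λ at a point x̄ ∈ Σ_λ with W(x̄) < 0, x̄ ≠ 0, and 2|x̄| + x̄₁ > λ, then (-Δ)^{σ/2}W(x̄) ≤ C · C_{n,σ} · |x̄|^{-σ} · W(x̄) < 0. -/

import Mathlib

open MeasureTheory Filter Metric Set Bornology

noncomputable section

/-- The space `ℝⁿ`. -/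
abbrev En (n : ℕ) := EuclideanSpace ℝ (Fin n)

/-- Membership in the weighted space `L_σ`. -/
def MemL (n : ℕ) (σ : ℝ) (w : En n → ℝ) : Prop :=
  LocallyIntegrable w volume ∧
    Integrable (fun x : En n => |w x| / (1 + ‖x‖ ^ ((n : ℝ) + σ))) volume

/-- `C^{1,1}_loc` on an open set `Ω`: near every point of `Ω`, `w` is
differentiable with Lipschitz-continuous derivative. -/
def C11locOn (n : ℕ) (Ω : Set (En n)) (w : En n → ℝ) : Prop :=
  ∀ x ∈ Ω, ∃ ε > 0, ∃ K : NNReal, ball x ε ⊆ Ω ∧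
    (∀ y ∈ ball x ε, DifferentiableAt ℝ w y) ∧
    LipschitzOnWith K (fderiv ℝ w) (ball x ε)

/-- `C^{1,1}_loc` on all of `ℝⁿ`. -/
def C11loc (n : ℕ) (w : En n → ℝ) : Prop := C11locOn n univ w

/-- `HasFracLap n σ c w x L` : the fractional Laplacian `(-Δ)^{σ/2} w`, with
normalization constant `c = C_{n,σ} > 0`, exists at `x` as a principal value
and is equal to `L`. -/
def HasFracLap (n : ℕ) (σ c : ℝ) (w : En n → ℝ) (x : En n) (L : ℝ) : Prop :=
  Tendsto
    (fun ε : ℝ => c * ∫ y in {y : En n | ε ≤ dist x y},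
        (w x - w y) / dist x y ^ ((n : ℝ) + σ))
    (nhdsWithin 0 (Ioi 0)) (nhds L)

/-- Reflection `x ↦ x^λ` about the hyperplane `T_λ = {x : x₁ = λ}`. -/
def reflPt (n : ℕ) [NeZero n] (l : ℝ) (x : En n) : En n :=
  WithLp.toLp 2 (fun i => if i = 0 then 2 * l - x 0 else x i)

/-- The half space `Σ_λ = {x : x₁ < λ}`. -/
def halfSpace (n : ℕ) [NeZero n] (l : ℝ) : Set (En n) := {x | x 0 < l}

/-!
Split the truncated integral at `T_λ` and reflect the part outside `Σ_λ`: by anti-symmetry it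
becomes an integral of `(W(x̄) + W(y)) / |x̄^λ - y|^{n+σ}` over the reflected region. On `Σ_λ`,
`|x̄ - y| ≤ |x̄^λ - y|` and `W(x̄) - W(y) ≤ 0`, so the two pieces add up to at most
`2 W(x̄) / |x̄^λ - y|^{n+σ} ≤ 0`; what is left lies near `x̄`, where `W(x̄) + W(y) < 0` by
continuity, or on `T_λ`, where `W = 0`. Keeping only a ball of radius `|x̄|` inside `Σ_λ` whose
points are within `8|x̄|` of `x̄^λ` (this is where `2|x̄| + x̄₁ > λ` enters) bounds every small
truncation by `C |x̄|^{-σ} W(x̄)`, hence also the limit.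
-/

lemma Real.add_rpow_le_two_rpow_mul_rpow_add_rpow {a b p : ℝ} (ha : 0 ≤ a) (hb : 0 ≤ b)
    (hp : 0 ≤ p) : (a + b) ^ p ≤ 2 ^ p * (a ^ p + b ^ p) := calc
  (a + b) ^ p ≤ (2 * max a b) ^ p := by
    rw [two_mul]; gcongr; exacts [le_max_left a b, le_max_right a b]
  _ = 2 ^ p * max a b ^ p := Real.mul_rpow zero_le_two (le_max_of_le_left ha)
  _ = 2 ^ p * max (a ^ p) (b ^ p) := by rw [Real.rpow_max ha hb hp]
  _ ≤ 2 ^ p * (a ^ p + b ^ p) := by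
    gcongr; exact max_le_add_of_nonneg (by positivity) (by positivity)

lemma integrable_inv_one_add_norm_rpow {E : Type*} [NormedAddCommGroup E] [NormedSpace ℝ E]
    [FiniteDimensional ℝ E] [MeasurableSpace E] [BorelSpace E] {μ : Measure E}
    [μ.IsAddHaarMeasure] {p : ℝ} (hp : (Module.finrank ℝ E : ℝ) < p) :
    Integrable (fun y : E => (1 + ‖y‖ ^ p)⁻¹) μ := by
  have hp0 : 0 ≤ p := (Nat.cast_nonneg _).trans hp.le
  refine ((integrable_one_add_norm hp).const_mul (2 ^ p)).mono' (by fun_prop)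
    (Eventually.of_forall fun y => ?_)
  have hpow := Real.add_rpow_le_two_rpow_mul_rpow_add_rpow zero_le_one (norm_nonneg y) hp0
  rw [Real.one_rpow] at hpow
  rw [Real.norm_of_nonneg (by positivity), Real.rpow_neg (by positivity)]
  calc (1 + ‖y‖ ^ p)⁻¹ = 2 ^ p * (2 ^ p * (1 + ‖y‖ ^ p))⁻¹ := by
        field_simp
    _ ≤ 2 ^ p * ((1 + ‖y‖) ^ p)⁻¹ := by gcongr

lemma one_add_norm_rpow_le_mul_dist_rpow {E : Type*} [SeminormedAddCommGroup E] {p ε : ℝ}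
    (hp : 0 ≤ p) (hε : 0 < ε) {z y : E} (hzy : ε ≤ dist z y) :
    1 + ‖y‖ ^ p ≤ ((ε ^ p)⁻¹ + (1 + ‖z‖ / ε) ^ p) * dist z y ^ p := by
  have hd : 0 < dist z y := hε.trans_le hzy
  have hone : 1 ≤ (ε ^ p)⁻¹ * dist z y ^ p := by
    rw [inv_mul_eq_div, one_le_div (by positivity)]
    exact Real.rpow_le_rpow hε.le hzy hp
  have hnorm : ‖y‖ ≤ (1 + ‖z‖ / ε) * dist z y := by
    have hz : ‖z‖ ≤ ‖z‖ / ε * dist z y := by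
      rw [div_mul_eq_mul_div, le_div_iff₀ hε]
      exact mul_le_mul_of_nonneg_left hzy (norm_nonneg z)
    have := norm_le_norm_add_norm_sub' y z
    rw [← dist_eq_norm, dist_comm] at this
    linarith
  have hpow : ‖y‖ ^ p ≤ (1 + ‖z‖ / ε) ^ p * dist z y ^ p := by
    rw [← Real.mul_rpow (by positivity) hd.le]
    exact Real.rpow_le_rpow (norm_nonneg y) hnorm hp
  linarith

section WeightedSpace

variable {n : ℕ} {σ : ℝ} {f g : En n → ℝ}

lemma memL_const (hσ : 0 < σ) (c : ℝ) : MemL n σ (fun _ => c) := by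
  refine ⟨locallyIntegrable_const c, ?_⟩
  have hp : (Module.finrank ℝ (En n) : ℝ) < n + σ := by
    rw [finrank_euclideanSpace_fin]; linarith
  simpa [div_eq_mul_inv] using (integrable_inv_one_add_norm_rpow (μ := volume) hp).const_mul |c|

lemma MemL.neg (hf : MemL n σ f) : MemL n σ (fun y => -f y) :=
  ⟨hf.1.neg, by simpa only [abs_neg] using hf.2⟩

lemma MemL.add (hf : MemL n σ f) (hg : MemL n σ g) : MemL n σ (fun y => f y + g y) := by
  refine ⟨hf.1.add hg.1, (hf.2.add hg.2).mono' ?_ (Eventually.of_forall fun y => ?_)⟩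
  · have := hf.1.aestronglyMeasurable.aemeasurable
    have := hg.1.aestronglyMeasurable.aemeasurable
    exact AEMeasurable.aestronglyMeasurable (by fun_prop)
  · rw [Pi.add_apply, Real.norm_of_nonneg (by positivity), ← add_div]
    gcongr
    exact abs_add_le _ _

lemma MemL.integrableOn_div_dist_rpow (hσ : 0 ≤ σ) (hf : MemL n σ f) (z : En n) {ε : ℝ}
    (hε : 0 < ε) :
    IntegrableOn (fun y => f y / dist z y ^ ((n : ℝ) + σ)) {y | ε ≤ dist z y} := by
  set p : ℝ := n + σ
  have hp : 0 ≤ p := by positivity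
  set M : ℝ := (ε ^ p)⁻¹ + (1 + ‖z‖ / ε) ^ p
  refine (hf.2.const_mul M).integrableOn.mono' ?_ ?_
  · have := hf.1.aestronglyMeasurable.aemeasurable
    exact (AEMeasurable.aestronglyMeasurable (by fun_prop)).restrict
  · refine ae_restrict_of_forall_mem (measurableSet_le measurable_const (by fun_prop))
      fun y (hy : ε ≤ dist z y) => ?_
    have hdp : 0 < dist z y ^ p := by have := hε.trans_le hy; positivity
    rw [Real.norm_eq_abs, abs_div, abs_of_pos hdp, mul_div_assoc',
      div_le_div_iff₀ hdp (by positivity)]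
    calc |f y| * (1 + ‖y‖ ^ p) ≤ |f y| * (M * dist z y ^ p) :=
          mul_le_mul_of_nonneg_left (one_add_norm_rpow_le_mul_dist_rpow hp hε hy) (abs_nonneg _)
      _ = M * |f y| * dist z y ^ p := by ring

end WeightedSpace

section Reflection

variable {n : ℕ} [NeZero n] {l : ℝ}

@[simp]
lemma reflPt_apply_zero (x : En n) : reflPt n l x 0 = 2 * l - x 0 := by
  simp [reflPt]

lemma reflPt_apply_of_ne (x : En n) {i : Fin n} (hi : i ≠ 0) : reflPt n l x i = x i := by
  simp [reflPt, hi]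

lemma reflPt_reflPt (x : En n) : reflPt n l (reflPt n l x) = x := by
  ext i
  rcases eq_or_ne i 0 with rfl | hi
  · simp
  · simp [reflPt_apply_of_ne _ hi]

lemma reflPt_eq_self {x : En n} (hx : x 0 = l) : reflPt n l x = x := by
  ext i
  rcases eq_or_ne i 0 with rfl | hi
  · simp only [reflPt_apply_zero, hx]
    ring
  · simp [reflPt_apply_of_ne _ hi]

lemma dist_reflPt_reflPt (x y : En n) : dist (reflPt n l x) (reflPt n l y) = dist x y := by
  simp only [EuclideanSpace.dist_eq]
  congr 1
  refine Finset.sum_congr rfl fun i _ => ?_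
  rcases eq_or_ne i 0 with rfl | hi
  · rw [reflPt_apply_zero, reflPt_apply_zero, dist_sub_left]
  · simp [reflPt_apply_of_ne _ hi]

lemma isometry_reflPt : Isometry (reflPt n l) :=
  Isometry.of_dist_eq dist_reflPt_reflPt

lemma dist_reflPt_comm (x y : En n) : dist (reflPt n l x) y = dist x (reflPt n l y) := by
  rw [← dist_reflPt_reflPt (l := l), reflPt_reflPt]

lemma dist_reflPt_self (x : En n) : dist (reflPt n l x) x = 2 * |l - x 0| := by
  have hdiff : reflPt n l x - x = EuclideanSpace.single 0 (2 * (l - x 0)) := by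
    ext i
    rcases eq_or_ne i 0 with rfl | hi
    · simp only [PiLp.sub_apply, reflPt_apply_zero, PiLp.single_eq_same]
      ring
    · simp [reflPt_apply_of_ne _ hi, hi]
  rw [dist_eq_norm, hdiff, PiLp.norm_single, Real.norm_eq_abs, abs_mul, abs_two]

lemma dist_le_dist_reflPt {x y : En n} (hx : x 0 < l) (hy : y 0 < l) :
    dist x y ≤ dist (reflPt n l x) y := by
  simp only [EuclideanSpace.dist_eq]
  refine Real.sqrt_le_sqrt (Finset.sum_le_sum fun i _ => ?_)
  rcases eq_or_ne i 0 with rfl | hi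
  · simp only [reflPt_apply_zero, Real.dist_eq, sq_abs]
    nlinarith
  · simp [reflPt_apply_of_ne _ hi]

lemma measurePreserving_reflPt : MeasurePreserving (reflPt n l) := by
  have hcoord (i : Fin n) :
      MeasurePreserving (fun t : ℝ => if i = 0 then 2 * l - t else t) := by
    split_ifs
    · exact Measure.measurePreserving_sub_left volume (2 * l)
    · exact MeasurePreserving.id volume
  convert (PiLp.volume_preserving_toLp (Fin n)).comp
    ((volume_preserving_pi hcoord).comp (PiLp.volume_preserving_ofLp (Fin n))) using 1
  ext x i
  rcases eq_or_ne i 0 with rfl | hi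
  · simp
  · simp [reflPt_apply_of_ne _ hi, hi]

lemma measurableSet_halfSpace : MeasurableSet (halfSpace n l) :=
  measurableSet_lt (by fun_prop) measurable_const

lemma setIntegral_comp_reflPt (f : En n → ℝ) (s : Set (En n)) :
    ∫ y in reflPt n l ⁻¹' s, f (reflPt n l y) = ∫ y in s, f y :=
  measurePreserving_reflPt.setIntegral_preimage_emb
    isometry_reflPt.isClosedEmbedding.measurableEmbedding f s

lemma setIntegral_eq_add_setIntegral_reflPt {f : En n → ℝ} {s : Set (En n)}
    (hf : IntegrableOn f s) :
    ∫ y in s, f y = (∫ y in s ∩ halfSpace n l, f y) +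
      ∫ y in reflPt n l ⁻¹' (s \ halfSpace n l), f (reflPt n l y) := by
  rw [setIntegral_comp_reflPt]
  exact (integral_inter_add_sdiff measurableSet_halfSpace hf).symm

end Reflection

section FarBall

variable {n : ℕ} [NeZero n]

def farBall (x : En n) : Set (En n) := ball (x - EuclideanSpace.single 0 (3 * ‖x‖)) ‖x‖

lemma measurableSet_farBall (x : En n) : MeasurableSet (farBall x) := measurableSet_ball

lemma dist_farBall_center (x : En n) :
    dist x (x - EuclideanSpace.single 0 (3 * ‖x‖)) = 3 * ‖x‖ := by
  rw [dist_eq_norm, sub_sub_cancel, PiLp.norm_single, Real.norm_of_nonneg (by positivity)]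

lemma coord_lt_of_mem_farBall {x y : En n} (hy : y ∈ farBall x) : y 0 < x 0 - 2 * ‖x‖ := by
  have hcoord := PiLp.dist_apply_le y (x - EuclideanSpace.single 0 (3 * ‖x‖)) 0
  rw [PiLp.sub_apply, PiLp.single_apply, if_pos rfl, Real.dist_eq] at hcoord
  have := (le_abs_self _).trans hcoord
  rw [farBall, mem_ball] at hy
  linarith

lemma two_mul_norm_lt_dist_of_mem_farBall {x y : En n} (hy : y ∈ farBall x) :
    2 * ‖x‖ < dist x y := by
  have := dist_triangle x y (x - EuclideanSpace.single 0 (3 * ‖x‖))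
  rw [farBall, mem_ball] at hy
  linarith [dist_farBall_center x]

lemma dist_lt_four_mul_norm_of_mem_farBall {x y : En n} (hy : y ∈ farBall x) :
    dist x y < 4 * ‖x‖ := by
  have := dist_triangle x (x - EuclideanSpace.single 0 (3 * ‖x‖)) y
  rw [farBall, mem_ball, dist_comm] at hy
  linarith [dist_farBall_center x]

lemma measureReal_farBall (x : En n) :
    volume.real (farBall x) = ‖x‖ ^ n * volume.real (ball (0 : En n) 1) := by
  rw [farBall, measureReal_def, Measure.addHaar_ball _ _ (norm_nonneg x),
    finrank_euclideanSpace_fin, ENNReal.toReal_mul, ENNReal.toReal_ofReal (by positivity),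
    measureReal_def]

end FarBall

def fracLapConst (n : ℕ) (σ : ℝ) : ℝ := 2 * volume.real (ball (0 : En n) 1) / 8 ^ ((n : ℝ) + σ)

lemma fracLapConst_pos (n : ℕ) (σ : ℝ) : 0 < fracLapConst n σ := by
  have : 0 < volume.real (ball (0 : En n) 1) :=
    ENNReal.toReal_pos (measure_ball_pos volume _ one_pos).ne' measure_ball_lt_top.ne
  unfold fracLapConst
  positivity

lemma measureReal_farBall_mul_div_rpow {n : ℕ} [NeZero n] {σ : ℝ} {x : En n} (hx : 0 < ‖x‖)
    (w : ℝ) :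
    volume.real (farBall x) * (2 * w / (8 * ‖x‖) ^ ((n : ℝ) + σ))
      = fracLapConst n σ * ‖x‖ ^ (-σ) * w := by
  rw [measureReal_farBall, fracLapConst, Real.mul_rpow (by norm_num) hx.le, Real.rpow_neg hx.le,
    Real.rpow_add hx, Real.rpow_natCast]
  field_simp

section Estimate

variable {n : ℕ} [NeZero n] {σ l ε p : ℝ} {W : En n → ℝ} {x : En n}

lemma farBall_subset (hx : x ∈ halfSpace n l) (hε : ε ≤ 2 * ‖x‖) :
    farBall x ⊆ {y | ε ≤ dist x y} ∩ halfSpace n l := fun y hy =>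
  ⟨hε.trans (two_mul_norm_lt_dist_of_mem_farBall hy).le,
    show y 0 < l by linarith [coord_lt_of_mem_farBall hy, norm_nonneg x, show x 0 < l from hx]⟩

lemma add_nonpos_of_notMem_far_inter_halfSpace (hanti : ∀ y, W (reflPt n l y) = -W y)
    (hneg : W x < 0) (hnear : ∀ y ∈ ball x ε, W x + W y ≤ 0) {y : En n} (hyl : y 0 ≤ l)
    (hyA : y ∉ {y | ε ≤ dist x y} ∩ halfSpace n l) : W x + W y ≤ 0 := by
  rcases hyl.lt_or_eq with hyS | hyT
  · have : ¬ε ≤ dist x y := fun h => hyA ⟨h, hyS⟩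
    exact hnear y (by rw [mem_ball, dist_comm]; linarith)
  · have hWy := hanti y
    rw [reflPt_eq_self hyT] at hWy
    linarith

lemma indicator_add_le_indicator_farBall (hp : 0 ≤ p)
    (hanti : ∀ y, W (reflPt n l y) = -W y) (hx : x ∈ halfSpace n l)
    (hmin : ∀ y ∈ halfSpace n l, W x ≤ W y) (hneg : W x < 0) (hfar : l < 2 * ‖x‖ + x 0)
    (hε : 0 < ε) (hε2 : ε ≤ 2 * ‖x‖) (hnear : ∀ y ∈ ball x ε, W x + W y ≤ 0)
    {y : En n} (hyl : y 0 ≤ l) (hyε : ε ≤ dist (reflPt n l x) y) :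
    ({y | ε ≤ dist x y} ∩ halfSpace n l).indicator (fun y => (W x - W y) / dist x y ^ p) y
        + (W x + W y) / dist (reflPt n l x) y ^ p
      ≤ (farBall x).indicator (fun _ => 2 * W x / (8 * ‖x‖) ^ p) y := by
  have hdp : 0 < dist (reflPt n l x) y ^ p := by have := hε.trans_le hyε; positivity
  by_cases hyA : y ∈ {y | ε ≤ dist x y} ∩ halfSpace n l
  · rw [indicator_of_mem hyA]
    obtain ⟨hxy, hyS⟩ := hyA
    have hdist : dist x y ≤ dist (reflPt n l x) y := dist_le_dist_reflPt hx hyS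
    have hkernel : (W x - W y) / dist x y ^ p ≤ (W x - W y) / dist (reflPt n l x) y ^ p := by
      have : 0 < dist x y ^ p := by have := hε.trans_le hxy; positivity
      rw [div_le_div_iff₀ this hdp]
      exact mul_le_mul_of_nonpos_left (Real.rpow_le_rpow dist_nonneg hdist hp)
        (sub_nonpos.2 (hmin y hyS))
    refine (add_le_add_left hkernel _).trans ?_
    rw [← add_div, sub_add_add_cancel, ← two_mul]
    by_cases hyB : y ∈ farBall x
    · rw [indicator_of_mem hyB]
      have hxpos : 0 < ‖x‖ := by linarith
      have hreflx : dist (reflPt n l x) x < 4 * ‖x‖ := by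
        rw [dist_reflPt_self, abs_of_pos (sub_pos.2 (show x 0 < l from hx))]
        linarith
      have hfarDist : dist (reflPt n l x) y ≤ 8 * ‖x‖ := by
        linarith [dist_triangle (reflPt n l x) x y, dist_lt_four_mul_norm_of_mem_farBall hyB]
      rw [div_le_div_iff₀ hdp (by positivity)]
      exact mul_le_mul_of_nonpos_left (Real.rpow_le_rpow dist_nonneg hfarDist hp) (by linarith)
    · rw [indicator_of_notMem hyB]
      exact div_nonpos_of_nonpos_of_nonneg (by linarith) hdp.le
  · have hyB : y ∉ farBall x := fun h => hyA (farBall_subset hx hε2 h)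
    rw [indicator_of_notMem hyA, indicator_of_notMem hyB, zero_add]
    exact div_nonpos_of_nonpos_of_nonneg
      (add_nonpos_of_notMem_far_inter_halfSpace hanti hneg hnear hyl hyA) hdp.le

lemma far_inter_halfSpace_subset (hx : x ∈ halfSpace n l) :
    {y | ε ≤ dist x y} ∩ halfSpace n l ⊆ {y | ε ≤ dist (reflPt n l x) y} ∩ {y | y 0 ≤ l} :=
  fun y ⟨hxy, hyS⟩ =>
    ⟨hxy.trans (dist_le_dist_reflPt hx hyS), show y 0 ≤ l from (hyS : y 0 < l).le⟩

lemma setIntegral_eq_setIntegral_indicator_add (hanti : ∀ y, W (reflPt n l y) = -W y)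
    (hx : x ∈ halfSpace n l)
    (hg : IntegrableOn (fun y => (W x - W y) / dist x y ^ p) {y | ε ≤ dist x y})
    (hh : IntegrableOn (fun y => (W x + W y) / dist (reflPt n l x) y ^ p)
      ({y | ε ≤ dist (reflPt n l x) y} ∩ {y | y 0 ≤ l})) :
    ∫ y in {y | ε ≤ dist x y}, (W x - W y) / dist x y ^ p =
      ∫ y in {y | ε ≤ dist (reflPt n l x) y} ∩ {y | y 0 ≤ l},
        (({y | ε ≤ dist x y} ∩ halfSpace n l).indicator (fun y => (W x - W y) / dist x y ^ p) y
          + (W x + W y) / dist (reflPt n l x) y ^ p) := by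
  set D : Set (En n) := {y | ε ≤ dist x y}
  set A := D ∩ halfSpace n l
  set A' : Set (En n) := {y | ε ≤ dist (reflPt n l x) y} ∩ {y | y 0 ≤ l}
  have hA : MeasurableSet A :=
    (measurableSet_le measurable_const (by fun_prop)).inter measurableSet_halfSpace
  have hAA' : A ⊆ A' := far_inter_halfSpace_subset hx
  have hpre : reflPt n l ⁻¹' (D \ halfSpace n l) = A' := by
    ext y
    simp only [D, A', halfSpace, mem_preimage, Set.mem_sdiff, mem_inter_iff, Set.mem_ofPred_eq,
      reflPt_apply_zero, dist_reflPt_comm, not_lt]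
    exact and_congr Iff.rfl ⟨fun h => by linarith, fun h => by linarith⟩
  rw [setIntegral_eq_add_setIntegral_reflPt hg, hpre,
    integral_add ((integrable_indicator_iff hA).2 (hg.mono_set inter_subset_left)).integrableOn hh,
    setIntegral_indicator hA, inter_eq_right.2 hAA']
  congr 1
  refine integral_congr_ae (Eventually.of_forall fun y => ?_)
  dsimp only
  rw [hanti, sub_neg_eq_add, ← dist_reflPt_comm]

lemma setIntegral_le_fracLapConst (hσ : 0 < σ) (hW : MemL n σ W)
    (hanti : ∀ y, W (reflPt n l y) = -W y) (hx : x ∈ halfSpace n l)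
    (hmin : ∀ y ∈ halfSpace n l, W x ≤ W y) (hneg : W x < 0) (hfar : l < 2 * ‖x‖ + x 0)
    (hε : 0 < ε) (hε2 : ε ≤ 2 * ‖x‖) (hnear : ∀ y ∈ ball x ε, W x + W y ≤ 0) :
    ∫ y in {y | ε ≤ dist x y}, (W x - W y) / dist x y ^ ((n : ℝ) + σ)
      ≤ fracLapConst n σ * ‖x‖ ^ (-σ) * W x := by
  set p : ℝ := n + σ
  set A := {y | ε ≤ dist x y} ∩ halfSpace n l
  set A' : Set (En n) := {y | ε ≤ dist (reflPt n l x) y} ∩ {y | y 0 ≤ l}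
  have hA' : MeasurableSet A' :=
    (measurableSet_le measurable_const (by fun_prop)).inter
      (measurableSet_le (by fun_prop) measurable_const)
  have hBA' : farBall x ⊆ A' := (farBall_subset hx hε2).trans (far_inter_halfSpace_subset hx)
  have hg : IntegrableOn (fun y => (W x - W y) / dist x y ^ p) {y | ε ≤ dist x y} := by
    simpa only [sub_eq_add_neg] using
      ((memL_const hσ (W x)).add hW.neg).integrableOn_div_dist_rpow hσ.le x hε
  have hh : IntegrableOn (fun y => (W x + W y) / dist (reflPt n l x) y ^ p) A' :=
    (((memL_const hσ (W x)).add hW).integrableOn_div_dist_rpow hσ.le _ hε).mono_set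
      inter_subset_left
  have hgA : IntegrableOn (A.indicator fun y => (W x - W y) / dist x y ^ p) A' :=
    ((integrable_indicator_iff (measurableSet_le measurable_const (by fun_prop) |>.inter
      measurableSet_halfSpace)).2 (hg.mono_set inter_subset_left)).integrableOn
  have hc : IntegrableOn ((farBall x).indicator fun _ => 2 * W x / (8 * ‖x‖) ^ p) A' :=
    ((integrable_indicator_iff (measurableSet_farBall x)).2
      (integrableOn_const measure_ball_lt_top.ne)).integrableOn
  calc ∫ y in {y | ε ≤ dist x y}, (W x - W y) / dist x y ^ p
      = ∫ y in A', (A.indicator (fun y => (W x - W y) / dist x y ^ p) y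
          + (W x + W y) / dist (reflPt n l x) y ^ p) :=
        setIntegral_eq_setIntegral_indicator_add hanti hx hg hh
    _ ≤ ∫ y in A', (farBall x).indicator (fun _ => 2 * W x / (8 * ‖x‖) ^ p) y :=
        setIntegral_mono_on (hgA.add hh) hc hA' fun y hy =>
          indicator_add_le_indicator_farBall (by positivity) hanti hx hmin hneg hfar hε hε2
            hnear hy.2 hy.1
    _ = volume.real (farBall x) * (2 * W x / (8 * ‖x‖) ^ p) := by
        rw [setIntegral_indicator (measurableSet_farBall x), inter_eq_right.2 hBA',
          setIntegral_const, smul_eq_mul]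
    _ = fracLapConst n σ * ‖x‖ ^ (-σ) * W x :=
        measureReal_farBall_mul_div_rpow (by linarith) (W x)

end Estimate

theorem statement7_general
    (n : ℕ) [NeZero n]
    (σ : ℝ) (hσ : 0 < σ ∧ σ < 2) :
    ∃ C > 0, ∀ (lam cns : ℝ), 0 < cns →
      ∀ (W : En n → ℝ), C11loc n W → MemL n σ W →
      (∀ x, W (reflPt n lam x) = -W x) →
      ∀ xb ∈ halfSpace n lam,
      (∀ y ∈ halfSpace n lam, W xb ≤ W y) → W xb < 0 →
      xb ≠ 0 → lam < 2 * ‖xb‖ + xb 0 →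
      ∀ L, HasFracLap n σ cns W xb L →
        L ≤ C * cns * ‖xb‖ ^ (-σ) * W xb ∧
        C * cns * ‖xb‖ ^ (-σ) * W xb < 0 := by
  refine ⟨fracLapConst n σ, fracLapConst_pos n σ, fun lam cns hcns W hC11 hW hanti xb hxb hmin
    hneg hxb0 hfar L hL => ?_⟩
  have hxb_pos : 0 < ‖xb‖ := norm_pos_iff.2 hxb0
  refine ⟨le_of_tendsto hL ?_,
    mul_neg_of_pos_of_neg (by have := fracLapConst_pos n σ; positivity) hneg⟩
  have hcont : ContinuousAt W xb := by
    obtain ⟨r, hr, -, -, hdiff, -⟩ := hC11 xb (mem_univ xb)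
    exact (hdiff xb (mem_ball_self hr)).continuousAt
  obtain ⟨δ, hδ, hnear⟩ := Metric.eventually_nhds_iff_ball.1
    (hcont.eventually (gt_mem_nhds (show W xb < -W xb by linarith)))
  filter_upwards [Ioo_mem_nhdsGT (lt_min hδ (by positivity : 0 < 2 * ‖xb‖))] with ε ⟨hε, hεδ⟩
  have hnear' (y : En n) (hy : y ∈ ball xb ε) : W xb + W y ≤ 0 := by
    linarith [hnear y (ball_subset_ball (hεδ.le.trans (min_le_left _ _)) hy)]
  calc cns * ∫ y in {y | ε ≤ dist xb y}, (W xb - W y) / dist xb y ^ ((n : ℝ) + σ)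
      ≤ cns * (fracLapConst n σ * ‖xb‖ ^ (-σ) * W xb) :=
        mul_le_mul_of_nonneg_left (setIntegral_le_fracLapConst hσ.1 hW hanti hxb hmin hneg
          hfar hε (hεδ.le.trans (min_le_right _ _)) hnear') hcns.le
    _ = fracLapConst n σ * cns * ‖xb‖ ^ (-σ) * W xb := by ring

/-- (the estimate (d-3)/(d-6): at a negative minimum of an
anti-symmetric function far away from the plane, the fractional Laplacian is
bounded by `C C_{n,σ} |x̄|^{-σ} W(x̄) < 0`, with `C` depending only on `n, σ`). -/
theorem statement7
    (n : ℕ) [NeZero n] (hn : 2 ≤ n)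
    (σ : ℝ) (hσ : 0 < σ ∧ σ < 2) :
    ∃ C > 0, ∀ (lam cns : ℝ), 0 < cns →
      ∀ (W : En n → ℝ), C11loc n W → MemL n σ W →
      (∀ x, W (reflPt n lam x) = -W x) →
      ∀ xb ∈ halfSpace n lam,
      (∀ y ∈ halfSpace n lam, W xb ≤ W y) → W xb < 0 →
      xb ≠ 0 → lam < 2 * ‖xb‖ + xb 0 →
      ∀ L, HasFracLap n σ cns W xb L →
        L ≤ C * cns * ‖xb‖ ^ (-σ) * W xb ∧
        C * cns * ‖xb‖ ^ (-σ) * W xb < 0 :=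
  statement7_general n σ hσ
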